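/- arXiv:2109.07948 — 4 statements merged into one kernel-verified Lean document; each statement's English description precedes it below -/
import Mathlib

section
/- Let P be a poset and let x, y be elements with x < y. If x_0, x_1, ..., x_n is an induced path in the incomparability graph of P with x_0 = x and x_n = y, then x_i < x_j in P for all indices i, j with j - i ≥ 2. -/
/-- The incomparability graph of a poset: edges are pairs of incomparable elements. -/
def incompGraph (V : Type*) [PartialOrder V] : SimpleGraph V where
  Adj a b := ¬ a ≤ b ∧ ¬ b ≤ a
  symm := by constructor; intro a b h; exact ⟨h.2, h.1⟩
  loopless := by constructor; intro a h; exact h.1 le_rfl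

/-!
Vertices at distance at least two on the path are distinct and adjacent in the comparability
graph, hence strictly comparable. If `x₀ < x₂`, the orientation propagates along the path:
`x₃ < x₁` together with the comparability of `x₀` and `x₃` would make `x₀, x₁` or `x₂, x₃`
comparable, so `x₁ < x₃`, and so on; and `x_{i+1} < x_j` then forces `x_i < x_j`, since
`x_j ≤ x_i` would give `x_{i+1} < x_i`. If instead `x₂ < x₀`, the dual argument gives
`x_n < x₀`, contradicting `x₀ < x_n`.
-/

section InducedIncompPath

variable {V : Type*} [PartialOrder V]

/-- The properties of an induced path `f 0, …, f n` in the incomparability graph that the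
argument uses; the values of `f` beyond `n` play no role. -/
structure IsInducedIncompPath (f : ℕ → V) (n : ℕ) : Prop where
  incompRel_succ : ∀ i < n, IncompRel (· ≤ ·) (f i) (f (i + 1))
  lt_or_gt : ∀ i j, i + 2 ≤ j → j ≤ n → f i < f j ∨ f j < f i

namespace IsInducedIncompPath

variable {f : ℕ → V} {n : ℕ}

theorem dual (h : IsInducedIncompPath f n) : IsInducedIncompPath (OrderDual.toDual ∘ f) n where
  incompRel_succ i hi := (h.incompRel_succ i hi).symm
  lt_or_gt i j hij hj := (h.lt_or_gt i j hij hj).symm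

theorem lt_add_two_succ (h : IsInducedIncompPath f n) {i : ℕ} (hi : i + 3 ≤ n)
    (hlt : f i < f (i + 2)) : f (i + 1) < f (i + 3) := by
  refine (h.lt_or_gt (i + 1) (i + 3) (by omega) hi).resolve_right fun hgt => ?_
  rcases h.lt_or_gt i (i + 3) (by omega) hi with h03 | h30
  · exact (h.incompRel_succ i (by omega)).not_lt (h03.trans hgt)
  · exact (h.incompRel_succ (i + 2) (by omega)).not_gt (h30.trans hlt)

theorem lt_add_two (h : IsInducedIncompPath f n) (h02 : f 0 < f 2) :
    ∀ i, i + 2 ≤ n → f i < f (i + 2)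
  | 0, _ => h02
  | i + 1, hi => h.lt_add_two_succ hi (h.lt_add_two h02 i (by omega))

theorem lt_of_add_two_le (h : IsInducedIncompPath f n) (h02 : f 0 < f 2) {i j : ℕ}
    (hij : i + 2 ≤ j) (hj : j ≤ n) : f i < f j := by
  obtain ⟨d, rfl⟩ := Nat.exists_eq_add_of_le hij
  induction d generalizing i with
  | zero => exact h.lt_add_two h02 i hj
  | succ d ih =>
    have hsucc : f (i + 1) < f (i + 2 + (d + 1)) := by
      simpa only [Nat.add_right_comm, Nat.add_assoc] using ih (i := i + 1) (by omega) (by omega)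
    refine (h.lt_or_gt i _ hij hj).resolve_right fun hgt => ?_
    exact (h.incompRel_succ i (by omega)).not_gt (hsucc.trans hgt)

theorem lt_of_first_lt_last (h : IsInducedIncompPath f n) (h0n : f 0 < f n) {i j : ℕ}
    (hij : i + 2 ≤ j) (hj : j ≤ n) : f i < f j := by
  rcases h.lt_or_gt 0 2 le_rfl (by omega) with h02 | h20
  · exact h.lt_of_add_two_le h02 hij hj
  · exact absurd (h.dual.lt_of_add_two_le h20 (by omega) le_rfl) h0n.not_gt

end IsInducedIncompPath

end InducedIncompPath

theorem isInducedIncompPath_of_adj_iff {V : Type*} [PartialOrder V] {n : ℕ}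
    {x : Fin (n + 1) → V} (hinj : Function.Injective x)
    (hpath : ∀ i j : Fin (n + 1),
      (incompGraph V).Adj (x i) (x j) ↔ ((i : ℕ) + 1 = j ∨ (j : ℕ) + 1 = i)) :
    IsInducedIncompPath (fun k => x (Fin.ofNat (n + 1) k)) n := by
  have hval {k : ℕ} (hk : k ≤ n) : (Fin.ofNat (n + 1) k : ℕ) = k := by
    rw [Fin.val_ofNat, Nat.mod_eq_of_lt (by omega)]
  refine ⟨fun i hi => (hpath _ _).mpr (.inl ?_), fun i j hij hj => ?_⟩
  · rw [hval hi.le, hval hi]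
  have hne : x (Fin.ofNat (n + 1) i) ≠ x (Fin.ofNat (n + 1) j) := fun heq => by
    have := congrArg Fin.val (hinj heq)
    rw [hval (by omega), hval hj] at this
    omega
  have hcomp : ¬ IncompRel (· ≤ ·) (x (Fin.ofNat (n + 1) i)) (x (Fin.ofNat (n + 1) j)) :=
    fun hinc => by
      have := (hpath _ _).mp hinc
      rw [hval (by omega), hval hj] at this
      omega
  rcases lt_or_eq_or_gt_or_incompRel (x (Fin.ofNat (n + 1) i)) (x (Fin.ofNat (n + 1) j))
    with hlt | heq | hgt | hinc
  exacts [.inl hlt, absurd heq hne, .inr hgt, absurd hinc hcomp]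

theorem stmt0 {V : Type*} [PartialOrder V] (n : ℕ) (x : Fin (n + 1) → V)
    (hinj : Function.Injective x)
    (hpath : ∀ i j : Fin (n + 1),
      (incompGraph V).Adj (x i) (x j) ↔ ((i : ℕ) + 1 = j ∨ (j : ℕ) + 1 = i))
    (hxy : x 0 < x (Fin.last n)) :
    ∀ i j : Fin (n + 1), (i : ℕ) + 2 ≤ (j : ℕ) → x i < x j := by
  have hlast : Fin.ofNat (n + 1) n = Fin.last n := Fin.ext (by simp)
  have h0n : x (Fin.ofNat (n + 1) 0) < x (Fin.ofNat (n + 1) n) := by rwa [hlast]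
  intro i j hij
  simpa only [Fin.ofNat_val_eq_self] using (isInducedIncompPath_of_adj_iff hinj hpath)
    |>.lt_of_first_lt_last h0n hij (Nat.le_of_lt_succ j.isLt)
end

section
/- Let G be a graph and x_0, ..., x_n an isometric path in G with n ≥ 2 (i.e., d_G(x_i, x_j) = |i - j| for all i, j). Then there exists a vertex x_{n+1} such that x_0, ..., x_n, x_{n+1} is an isometric path in G if and only if B_G(x_n, 1) is not contained in B_G(x_0, n). -/
/-!
A vertex `y` with `d(x_n, y) ≤ 1` and `d(x_0, y) > n` is at distance exactly `n + 1` from `x_0`.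
For every `i`, the triangle inequality through `x_n` bounds `d(x_i, y)` by `n + 1 - i` from
above and the one through `x_i` bounds it from below, so `y` extends the path isometrically.
-/

namespace SimpleGraph

variable {V : Type*} (G : SimpleGraph V)

theorem edist_eq_sub_of_le_sub {u w y : V} {i k : ℕ} (hik : i ≤ k) (huw : G.edist u w = i)
    (huy : G.edist u y = k) (hwy : G.edist w y ≤ (k - i : ℕ)) :
    G.edist w y = (k - i : ℕ) := by
  refine le_antisymm hwy ?_
  have htri : (k : ℕ∞) ≤ i + G.edist w y := huy ▸ huw ▸ G.edist_triangle
  lift G.edist w y to ℕ using ne_top_of_le_ne_top (ENat.natCast_ne_top _) hwy with m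
  norm_cast at htri ⊢
  omega

theorem edist_eq_add_one_of_not_le {u v y : V} {n : ℕ} (huv : G.edist u v = n)
    (hvy : G.edist v y ≤ 1) (huy : ¬ G.edist u y ≤ n) : G.edist u y = (n + 1 : ℕ) := by
  refine le_antisymm ?_ ?_
  · calc G.edist u y ≤ G.edist u v + G.edist v y := G.edist_triangle
      _ ≤ n + 1 := by rw [huv]; gcongr
      _ = (n + 1 : ℕ) := by norm_cast
  · exact_mod_cast Order.add_one_le_of_lt (not_le.mp huy)

end SimpleGraph

open SimpleGraph

theorem stmt11_general {V : Type*} (G : SimpleGraph V) (n : ℕ) (x : ℕ → V)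
    (hiso : ∀ i j : ℕ, i ≤ j → j ≤ n → G.edist (x i) (x j) = ((j - i : ℕ) : ℕ∞)) :
    (∃ y : V, ∀ i : ℕ, i ≤ n → G.edist (x i) y = ((n + 1 - i : ℕ) : ℕ∞)) ↔
      ¬ ({y : V | G.edist (x n) y ≤ 1} ⊆ {y : V | G.edist (x 0) y ≤ (n : ℕ∞)}) := by
  constructor
  · rintro ⟨y, hy⟩ hsub
    have hny : G.edist (x n) y ≤ 1 := by simp [hy n le_rfl]
    have h0y : G.edist (x 0) y ≤ n := hsub hny
    rw [hy 0 n.zero_le, Nat.cast_le] at h0y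
    omega
  · intro h
    obtain ⟨y, hny, h0y⟩ := Set.not_subset.mp h
    have h0n : G.edist (x 0) (x n) = n := by simpa using hiso 0 n n.zero_le le_rfl
    have hy0 := G.edist_eq_add_one_of_not_le h0n hny h0y
    refine ⟨y, fun i hi => G.edist_eq_sub_of_le_sub (by omega)
      (by simpa using hiso 0 i i.zero_le hi) hy0 ?_⟩
    calc G.edist (x i) y ≤ G.edist (x i) (x n) + G.edist (x n) y := G.edist_triangle
      _ ≤ (n - i : ℕ) + 1 := by rw [hiso i n hi le_rfl]; exact add_le_add le_rfl hny
      _ = (n + 1 - i : ℕ) := by norm_cast; omega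

theorem stmt11 {V : Type*} (G : SimpleGraph V) (n : ℕ) (hn : 2 ≤ n) (x : ℕ → V)
    (hiso : ∀ i j : ℕ, i ≤ j → j ≤ n → G.edist (x i) (x j) = ((j - i : ℕ) : ℕ∞)) :
    (∃ y : V, ∀ i : ℕ, i ≤ n → G.edist (x i) y = ((n + 1 - i : ℕ) : ℕ∞)) ↔
      ¬ ({y : V | G.edist (x n) y ≤ 1} ⊆ {y : V | G.edist (x 0) y ≤ (n : ℕ∞)}) :=
  stmt11_general G n x hiso
end

section
/- Let P = (V, ≤) be a poset. The following are equivalent: (i) P contains no subset {a, b, c, d} with a < b, c < d and all other pairs incomparable (i.e., P does not embed 2 ⊕ 2); (ii) the family of sets { {y : y < x} : x ∈ V } is totally ordered by set inclusion. -/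
theorem stmt15 {V : Type*} [PartialOrder V] :
    (¬ ∃ a b c d : V, a < b ∧ c < d ∧
        ¬ a ≤ c ∧ ¬ c ≤ a ∧ ¬ a ≤ d ∧ ¬ d ≤ a ∧
        ¬ b ≤ c ∧ ¬ c ≤ b ∧ ¬ b ≤ d ∧ ¬ d ≤ b) ↔
    (∀ x y : V, {z : V | z < x} ⊆ {z : V | z < y} ∨ {z : V | z < y} ⊆ {z : V | z < x}) := by
  constructor
  · intro h x y
    by_contra hc
    push_neg at hc
    rw [Set.not_subset, Set.not_subset] at hc
    obtain ⟨⟨a, hax, hay⟩, ⟨b, hby, hbx⟩⟩ := hc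
    simp only [Set.mem_setOf_eq] at hax hay hby hbx
    apply h
    refine ⟨a, x, b, y, hax, hby, ?_, ?_, ?_, ?_, ?_, ?_, ?_, ?_⟩
    · intro hab; exact hay (lt_of_le_of_lt hab hby)
    · intro hba; exact hbx (lt_of_le_of_lt hba hax)
    · intro hA; rcases hA.lt_or_eq with h1 | h1
      · exact hay h1
      · exact hbx (h1 ▸ hby |>.trans hax)
    · intro hya; exact hbx ((hby.trans_le hya).trans hax)
    · intro hxb; exact hay (hax.trans (hxb.trans_lt hby))
    · intro hbx'
      rcases hbx'.lt_or_eq with h1 | h1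
      · exact hbx h1
      · exact hay (hax.trans (h1 ▸ hby))
    · intro hxy; exact hay (hax.trans_le hxy)
    · intro hyx; exact hbx (hby.trans_le hyx)
  · rintro h ⟨a, b, c, d, hab, hcd, _, _, had, _, _, hcb, _, _⟩
    rcases h b d with hs | hs
    · exact had (hs hab).le
    · exact hcb (hs hcd).le
end

section
/- Let P = (V, ≤) be a poset and G its incomparability graph. For every subset X of V, the diameter of X in G equals the diameter of its order-convex hull Conv_P(X) = ↓X ∩ ↑X in G, i.e., sup{d_G(x,y) : x,y ∈ X} = sup{d_G(x,y) : x,y ∈ Conv_P(X)}. -/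
/-- The order-convex hull of a set: all elements between two members of the set. -/
def convHull {V : Type*} [PartialOrder V] (X : Set V) : Set V :=
  {z | ∃ x ∈ X, ∃ y ∈ X, x ≤ z ∧ z ≤ y}

theorem subset_convHull {V : Type*} [PartialOrder V] (X : Set V) : X ⊆ convHull X :=
  fun x hx => ⟨x, hx, x, hx, le_rfl, le_rfl⟩

namespace incompGraph

variable {V : Type*} [PartialOrder V]

theorem orderDual_eq : incompGraph Vᵒᵈ = incompGraph V := by
  ext a b
  exact and_comm

theorem le_or_edist_le_length {x z u : V} (p : (incompGraph V).Walk x u) (hxz : x ≤ z) :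
    u ≤ z ∨ (incompGraph V).edist z u ≤ p.length := by
  induction p with
  | nil => exact .inl hxz
  | @cons x x' u hxx' p ih =>
    by_cases hx'z : x' ≤ z
    · refine (ih hx'z).imp_right fun h => h.trans ?_
      simp
    · have hzx' : (incompGraph V).Adj z x' := ⟨fun h => hxx'.1 (hxz.trans h), hx'z⟩
      refine .inr ?_
      calc (incompGraph V).edist z u ≤ (hzx'.toWalk.append p).length := SimpleGraph.edist_le _
        _ = p.length + 1 := by simp [add_comm]

theorem le_or_edist_le {x z : V} (hxz : x ≤ z) (u : V) :
    u ≤ z ∨ (incompGraph V).edist z u ≤ (incompGraph V).edist x u := by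
  by_cases hxu : (incompGraph V).edist x u = ⊤
  · exact .inr (hxu ▸ le_top)
  obtain ⟨p, hp⟩ := SimpleGraph.exists_walk_of_edist_ne_top hxu
  exact hp ▸ le_or_edist_le_length p hxz

theorem le_or_edist_le' {z y : V} (hzy : z ≤ y) (u : V) :
    z ≤ u ∨ (incompGraph V).edist z u ≤ (incompGraph V).edist y u := by
  have := le_or_edist_le (V := Vᵒᵈ) (OrderDual.toDual_le_toDual.2 hzy) u
  rwa [orderDual_eq] at this

theorem edist_le_max_of_le_of_le {x y z : V} (hxz : x ≤ z) (hzy : z ≤ y) (u : V) :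
    (incompGraph V).edist z u ≤ max ((incompGraph V).edist x u) ((incompGraph V).edist y u) := by
  rcases le_or_edist_le hxz u with huz | h
  · rcases le_or_edist_le' hzy u with hzu | h
    · simp [le_antisymm hzu huz, SimpleGraph.edist_self]
    · exact le_max_of_le_right h
  · exact le_max_of_le_left h

theorem edist_le_of_mem_convHull {X : Set V} {b : ℕ∞}
    (hX : ∀ x ∈ X, ∀ y ∈ X, (incompGraph V).edist x y ≤ b) {z w : V}
    (hz : z ∈ convHull X) (hw : w ∈ convHull X) : (incompGraph V).edist z w ≤ b := by
  obtain ⟨x₁, hx₁, y₁, hy₁, hx₁z, hzy₁⟩ := hz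
  obtain ⟨x₂, hx₂, y₂, hy₂, hx₂w, hwy₂⟩ := hw
  have hXw : ∀ a ∈ X, (incompGraph V).edist a w ≤ b := fun a ha => by
    rw [SimpleGraph.edist_comm]
    refine (edist_le_max_of_le_of_le hx₂w hwy₂ a).trans (max_le ?_ ?_) <;>
      rw [SimpleGraph.edist_comm] <;> apply hX a ha <;> assumption
  exact (edist_le_max_of_le_of_le hx₁z hzy₁ w).trans (max_le (hXw x₁ hx₁) (hXw y₁ hy₁))

end incompGraph

theorem stmt19 {V : Type*} [PartialOrder V] (X : Set V) :
    (⨆ x ∈ X, ⨆ y ∈ X, (incompGraph V).edist x y) =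
      ⨆ x ∈ convHull X, ⨆ y ∈ convHull X, (incompGraph V).edist x y := by
  refine le_antisymm ?_ ?_
  · exact iSup₂_le fun x hx => iSup₂_le fun y hy =>
      le_iSup₂_of_le x (subset_convHull X hx) (le_iSup₂_of_le y (subset_convHull X hy) le_rfl)
  · exact iSup₂_le fun z hz => iSup₂_le fun w hw =>
      incompGraph.edist_le_of_mem_convHull
        (fun x hx y hy => le_iSup₂_of_le x hx (le_iSup₂_of_le y hy le_rfl)) hz hw
end
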